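/- arXiv:2509.16147 — 2 statements merged into one kernel-verified Lean document; each statement's English description precedes it below -/
import Mathlib

section
/- Let G be a finite group satisfying the conjugacy-product property: for all x, y ∈ G with x^G ≠ (y⁻¹)^G, the setwise product x^G · y^G equals (xy)^G. Then G is either abelian or a Camina group. -/
open scoped Classical Pointwise

/-- The conjugacy class of `x` in `G`. -/
def conjClass {G : Type*} [Group G] (x : G) : Set G := {y | ∃ g : G, g * x * g⁻¹ = y}

/-- The adjacency matrix of a subset `C` of `G`. -/
noncomputable def adjMat (G : Type*) [Group G] (C : Set G) : Matrix G G ℂ :=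
  Matrix.of fun x y => if y * x⁻¹ ∈ C then (1 : ℂ) else 0

/-- The dual idempotent of a subset `C` of `G` (base point the identity). -/
noncomputable def dualIdem (G : Type*) [Group G] (C : Set G) : Matrix G G ℂ :=
  Matrix.of fun x y => if x = y ∧ y ∈ C then (1 : ℂ) else 0

/-- The Terwilliger algebra of the group association scheme of `G`, with base point `e`. -/
noncomputable def TerwAlg (G : Type*) [Group G] [Fintype G] [DecidableEq G] : Subalgebra ℂ (Matrix G G ℂ) :=
  Algebra.adjoin ℂ
    ((Set.range fun x : G => adjMat G (conjClass x)) ∪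
     (Set.range fun x : G => dualIdem G (conjClass x)))

/-- A Camina group: a nonabelian group in which every conjugacy class outside the
commutator subgroup is a coset of the commutator subgroup. -/
def IsCamina (G : Type*) [Group G] : Prop :=
  (¬ ∀ a b : G, a * b = b * a) ∧
  ∀ x : G, x ∉ commutator G → conjClass x = x • (commutator G : Set G)

/-- The action of the unit group of a field on (the multiplicative version of) its
additive group, by multiplication. -/
noncomputable def frobAct (F : Type*) [Field F] : Fˣ →* MulAut (Multiplicative F) where
  toFun u := AddEquiv.toMultiplicative (DistribMulAction.toAddAut Fˣ F u)
  map_one' := by ext x; simp [DistribMulAction.toAddAut]; rfl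
  map_mul' u v := by ext x; simp [DistribMulAction.toAddAut, mul_smul]; rfl


/-- The Frobenius group `F ⋊ Fˣ` for `F` the field with `p ^ r` elements. -/
abbrev FrobGrp (p r : ℕ) [Fact p.Prime] : Type :=
  Multiplicative (GaloisField p r) ⋊[frobAct (GaloisField p r)] (GaloisField p r)ˣ

/-!
Always `x^G ⊆ x G'`, since `x⁻¹ (g x g⁻¹) = ⁅x⁻¹, g⁆`. Conversely let `y ∉ G'`. Then `y a` is
never conjugate to `a` (else `y` would be a commutator), so the product property applied to
`y a` and the class of `a⁻¹` gives `y ⁅a, b⁆ ∈ y^G`. As the coset `y G'` avoids `G'`, the set of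
`c ∈ G'` with `y c ∈ y^G` for every `y ∉ G'` is closed under products and inverses, so it is `G'`.
-/

open scoped commutatorElement

lemma mem_conjClass_iff {G : Type*} [Group G] {x y : G} : y ∈ conjClass x ↔ IsConj x y :=
  isConj_iff.symm

lemma mem_conjClass_self {G : Type*} [Group G] (x : G) : x ∈ conjClass x :=
  mem_conjClass_iff.mpr (IsConj.refl x)

lemma commutatorElement_mem_commutator {G : Type*} [Group G] (a b : G) :
    ⁅a, b⁆ ∈ commutator G :=
  Subgroup.commutator_mem_commutator (Subgroup.mem_top a) (Subgroup.mem_top b)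

lemma conjClass_subset_smul_commutator {G : Type*} [Group G] (x : G) :
    conjClass x ⊆ x • (commutator G : Set G) := by
  rintro _ ⟨g, rfl⟩
  rw [mem_leftCoset_iff]
  have hcomm : x⁻¹ * (g * x * g⁻¹) = ⁅x⁻¹, g⁆ := by group
  exact hcomm ▸ commutatorElement_mem_commutator x⁻¹ g

lemma not_isConj_mul_self_of_notMem_commutator {G : Type*} [Group G] {y : G}
    (hy : y ∉ commutator G) (a : G) : ¬ IsConj (y * a) a := by
  intro hconj
  obtain ⟨g, hg⟩ := isConj_iff.mp hconj.symm
  have hy_comm : y = ⁅g, a⁆ := by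
    rw [commutatorElement_def, hg]
    group
  exact hy (hy_comm ▸ commutatorElement_mem_commutator g a)

def HasConjClassProduct (G : Type*) [Group G] : Prop :=
  ∀ x y : G, conjClass x ≠ conjClass y⁻¹ → conjClass x * conjClass y = conjClass (x * y)

namespace HasConjClassProduct

variable {G : Type*} [Group G]

lemma isConj_mul_mul (h : HasConjClassProduct G) {x z w : G} (hxz : ¬ IsConj x z⁻¹)
    (hzw : IsConj z w) : IsConj (x * z) (x * w) := by
  have hne : conjClass x ≠ conjClass z⁻¹ := fun heq =>
    hxz (isConj_comm.mp (mem_conjClass_iff.mp (heq ▸ mem_conjClass_self x)))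
  rw [← mem_conjClass_iff, ← h x z hne]
  exact Set.mul_mem_mul (mem_conjClass_self x) (mem_conjClass_iff.mpr hzw)

lemma isConj_mul_commutatorElement (h : HasConjClassProduct G) {y : G}
    (hy : y ∉ commutator G) (a b : G) : IsConj y (y * ⁅a, b⁆) := by
  -- Multiply `y * a` by the conjugates `a⁻¹` and `b * a⁻¹ * b⁻¹` of `a⁻¹`.
  have hconj := h.isConj_mul_mul (x := y * a) (z := a⁻¹) (w := b * a⁻¹ * b⁻¹)
    (by simpa using not_isConj_mul_self_of_notMem_commutator hy a) (isConj_iff.mpr ⟨b, rfl⟩)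
  convert hconj using 1 <;> group

lemma isConj_mul_of_mem_commutator (h : HasConjClassProduct G) {c : G}
    (hc : c ∈ commutator G) : ∀ y ∉ commutator G, IsConj y (y * c) := by
  rw [commutator_eq_closure] at hc
  induction hc using Subgroup.closure_induction with
  | mem c hc =>
    obtain ⟨a, b, rfl⟩ := hc
    exact fun y hy => h.isConj_mul_commutatorElement hy a b
  | one => exact fun y _ => by rw [mul_one]
  | mul a b ha _ iha ihb =>
    intro y hy
    rw [← commutator_eq_closure] at ha
    have hya : y * a ∉ commutator G := fun hya => hy (by simpa using mul_mem hya (inv_mem ha))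
    simpa only [mul_assoc] using (iha y hy).trans (ihb (y * a) hya)
  | inv a ha iha =>
    intro y hy
    rw [← commutator_eq_closure] at ha
    have hya : y * a⁻¹ ∉ commutator G := fun hya => hy (by simpa using mul_mem hya ha)
    simpa using (iha (y * a⁻¹) hya).symm

lemma conjClass_eq_smul_commutator (h : HasConjClassProduct G) {x : G}
    (hx : x ∉ commutator G) : conjClass x = x • (commutator G : Set G) := by
  refine (conjClass_subset_smul_commutator x).antisymm fun z hz => ?_
  rw [mem_leftCoset_iff] at hz
  simpa using mem_conjClass_iff.mpr (h.isConj_mul_of_mem_commutator hz x hx)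

end HasConjClassProduct

theorem stmt3_general {G : Type*} [Group G]
    (h : ∀ x y : G, conjClass x ≠ conjClass y⁻¹ →
      conjClass x * conjClass y = conjClass (x * y)) :
    (∀ a b : G, a * b = b * a) ∨ IsCamina G := by
  refine or_iff_not_imp_left.mpr fun hab => ⟨hab, fun _ hx => ?_⟩
  exact HasConjClassProduct.conjClass_eq_smul_commutator h hx

/-- A finite group satisfying the conjugacy-product property is abelian or a Camina group. -/
theorem stmt3 {G : Type*} [Group G] [Finite G]
    (h : ∀ x y : G, conjClass x ≠ conjClass y⁻¹ →
      conjClass x * conjClass y = conjClass (x * y)) :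
    (∀ a b : G, a * b = b * a) ∨ IsCamina G :=
  stmt3_general h
end

section
/- Let G be a finite abelian group. Then the dimension over ℂ of the Terwilliger algebra T(G) of the group association scheme of G equals |G|². -/
open scoped Classical Pointwise

/-! In an abelian group every conjugacy class is a singleton, so the generators of `T(G)` are
the diagonal matrix units `E*_{c} = e_{cc}` together with the permutation matrices `A_{g}`.
The sandwich `E*_{c} A_{d c⁻¹} E*_{d}` picks out the single entry `(c, d)` of `A_{d c⁻¹}`, which
is `1`, so it is the matrix unit `e_{cd}`. Hence `T(G)` contains every matrix unit and is the
whole matrix algebra, of dimension `|G|²`. -/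

theorem conjClass_eq_singleton {G : Type*} [CommGroup G] (x : G) : conjClass x = {x} := by
  ext y
  simp [conjClass, mul_comm _ x, mul_assoc, eq_comm]

section Singleton

variable {G : Type*} [Group G] [DecidableEq G]

theorem dualIdem_singleton (c : G) : dualIdem G {c} = Matrix.single c c 1 := by
  ext x y
  simp only [dualIdem, Matrix.of_apply, Set.mem_singleton_iff, Matrix.single_apply]
  grind

theorem dualIdem_singleton_mul_adjMat_mul_dualIdem_singleton [Fintype G] (c d : G) :
    dualIdem G {c} * adjMat G {d * c⁻¹} * dualIdem G {d} = Matrix.single c d 1 := by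
  simp [dualIdem_singleton, adjMat]

end Singleton

theorem Subalgebra.eq_top_of_forall_single_one_mem {R n : Type*} [CommSemiring R] [Fintype n]
    [DecidableEq n] (S : Subalgebra R (Matrix n n R))
    (h : ∀ i j, Matrix.single i j (1 : R) ∈ S) : S = ⊤ := by
  refine Algebra.eq_top_iff.mpr fun M => ?_
  induction M using Matrix.induction_on' with
  | h_zero => exact zero_mem S
  | h_add p q hp hq => exact add_mem hp hq
  | h_std_basis i j x =>
    simpa [Matrix.smul_single] using S.smul_mem (h i j) x

theorem terwAlg_eq_top {G : Type*} [CommGroup G] [Fintype G] [DecidableEq G] :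
    TerwAlg G = ⊤ := by
  refine Subalgebra.eq_top_of_forall_single_one_mem _ fun c d => ?_
  have mem_dualIdem (x : G) : dualIdem G {x} ∈ TerwAlg G := by
    rw [← conjClass_eq_singleton]
    exact Algebra.subset_adjoin (Or.inr ⟨x, rfl⟩)
  have mem_adjMat (x : G) : adjMat G {x} ∈ TerwAlg G := by
    rw [← conjClass_eq_singleton]
    exact Algebra.subset_adjoin (Or.inl ⟨x, rfl⟩)
  rw [← dualIdem_singleton_mul_adjMat_mul_dualIdem_singleton]
  exact mul_mem (mul_mem (mem_dualIdem c) (mem_adjMat _)) (mem_dualIdem d)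

/-- Bannai–Munemasa: the Terwilliger algebra of a finite abelian group has dimension `|G|²`. -/
theorem stmt4 {G : Type*} [CommGroup G] [Fintype G] [DecidableEq G] :
    Module.finrank ℂ (TerwAlg G) = Fintype.card G ^ 2 := by
  rw [terwAlg_eq_top, subalgebra_top_finrank_eq_submodule_top_finrank, finrank_top,
    Module.finrank_matrix, Module.finrank_self, mul_one, sq]
end
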